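/- There exist a T0 Alexandroff space X, cosheaves F and G on X, and a surjective cosheaf homomorphism α : F → G such that the kernel precosheaf U ↦ Ker(α(U)) is not a cosheaf. Concretely, take X = {a,b,c} with open sets ∅, {a}, {a,b}, {a,c}, X; F the constant functor Z on nonempty open sets with identity structure maps; G with G({a}) = Z and 0 elsewhere; and α the unique surjection. Then (Ker α)(X) = Z while the colimit of Ker α over the nerve of the cover {{a,b},{a,c}} is Z², so the cosheaf condition fails. -/

import Mathlib

open CategoryTheory CategoryTheory.Limits TopologicalSpace

/-- The minimal open set containing `x`. -/
def minOpen {X : Type} [TopologicalSpace X] (x : X) : Set X :=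
  ⋂₀ {U : Set X | IsOpen U ∧ x ∈ U}

lemma isOpen_minOpen {X : Type} [TopologicalSpace X] [AlexandrovDiscrete X] (x : X) :
    IsOpen (minOpen x) :=
  isOpen_sInter fun _ h => h.1

/-- The minimal open set containing `x`, as an element of `Opens X`. -/
def Uo {X : Type} [TopologicalSpace X] [AlexandrovDiscrete X] (x : X) : Opens X :=
  ⟨minOpen x, isOpen_minOpen x⟩

lemma minOpen_le {X : Type} [TopologicalSpace X] {x : X} {U : Opens X} (hx : x ∈ U) :
    minOpen x ⊆ (U : Set X) :=
  Set.sInter_subset_of_mem ⟨U.isOpen, hx⟩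

/-- A precosheaf of abelian groups on `X`: a covariant functor on open sets. -/
abbrev Precosheaf (X : Type) [TopologicalSpace X] := Opens X ⥤ AddCommGrpCat.{0}

variable {X : Type} [TopologicalSpace X]

/-- The nerve of an open cover: the nonempty finite intersections of its members. -/
def nerveSet (𝒰 : Set (Opens X)) : Set (Opens X) :=
  {V | (V : Set X).Nonempty ∧ ∃ s : Finset (Opens X), ↑s ⊆ 𝒰 ∧ s.Nonempty ∧ V = s.inf id}

lemma nerve_le {𝒰 : Set (Opens X)} {U : Opens X} (h : ∀ V ∈ 𝒰, V ≤ U)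
    {V : Opens X} (hV : V ∈ nerveSet 𝒰) : V ≤ U := by
  obtain ⟨-, s, hs, ⟨w, hw⟩, rfl⟩ := hV
  exact le_trans (Finset.inf_le hw) (h w (hs hw))

/-- The diagram of a precosheaf over the nerve of an open cover. -/
def nerveDiagram (F : Precosheaf X) (𝒰 : Set (Opens X)) :
    ObjectProperty.FullSubcategory (· ∈ nerveSet 𝒰) ⥤ AddCommGrpCat.{0} :=
  ObjectProperty.ι (· ∈ nerveSet 𝒰) ⋙ F

/-- The canonical cocone on the nerve diagram with apex `F(U)`. -/
def coverCocone (F : Precosheaf X) (U : Opens X) (𝒰 : Set (Opens X))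
    (h : ∀ V ∈ 𝒰, V ≤ U) : Cocone (nerveDiagram F 𝒰) where
  pt := F.obj U
  ι :=
    { app := fun V => F.map (homOfLE (nerve_le h V.2))
      naturality := fun a b f => by
        dsimp [nerveDiagram]
        rw [Category.comp_id, ← F.map_comp]
        rfl }

/-- A precosheaf is a cosheaf if for every open `U` and every open cover `𝒰` of `U`, the
canonical map from the colimit over the nerve of `𝒰` to `F(U)` is an isomorphism, i.e.
`F(U)` is the colimit of the nerve diagram. -/
def IsCosheaf (F : Precosheaf X) : Prop :=
  ∀ (U : Opens X) (𝒰 : Set (Opens X)) (h𝒰 : ∀ V ∈ 𝒰, V ≤ U), U ≤ sSup 𝒰 →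
    Nonempty (IsColimit (coverCocone F U 𝒰 h𝒰))

/-- The Alexandroff space `X(P)` of a poset `P`: open sets are the up-sets. -/
def upTop (P : Type) [Preorder P] : TopologicalSpace P where
  IsOpen := IsUpperSet
  isOpen_univ := isUpperSet_univ
  isOpen_inter _ _ := IsUpperSet.inter
  isOpen_sUnion _ h := isUpperSet_sUnion h

variable {P : Type} [PartialOrder P]

/-- The diagram of a cellular cosheaf `F : P ⥤ Ab` over the subposet `U ⊆ P`. -/
def openDiagram (F : P ⥤ AddCommGrpCat.{0}) (U : Set P) :
    ObjectProperty.FullSubcategory (· ∈ U) ⥤ AddCommGrpCat.{0} :=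
  ObjectProperty.ι (· ∈ U) ⋙ F

noncomputable def hatMap (F : P ⥤ AddCommGrpCat.{0}) {U V : Set P} (h : U ⊆ V) :
    colimit (openDiagram F U) ⟶ colimit (openDiagram F V) :=
  colimit.pre (openDiagram F V) (ObjectProperty.ιOfLE fun _ hx => h hx)

lemma hatMap_ι (F : P ⥤ AddCommGrpCat.{0}) {U V : Set P} (h : U ⊆ V)
    (j : ObjectProperty.FullSubcategory (· ∈ U)) :
    colimit.ι (openDiagram F U) j ≫ hatMap F h =
      colimit.ι (openDiagram F V) ⟨j.1, h j.2⟩ := by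
  exact colimit.ι_pre (openDiagram F V) (ObjectProperty.ιOfLE fun _ hx => h hx) j

/-- The cosheaf `F̂` on `X(P)` associated to a cellular cosheaf `F : P ⥤ Ab`,
with `F̂(U) = colim_{x ∈ U} F(x)`. -/
noncomputable def hatF (F : P ⥤ AddCommGrpCat.{0}) :
    @TopologicalSpace.Opens P (upTop P) ⥤ AddCommGrpCat.{0} where
  obj U := colimit (openDiagram F (U : Set P))
  map {U V} h := hatMap F h.le
  map_id U := by
    apply colimit.hom_ext
    intro j
    exact (hatMap_ι F (fun _ hx => hx) j).trans (by simp)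
  map_comp {U V W} f g := by
    apply colimit.hom_ext
    intro j
    exact (hatMap_ι F (f ≫ g).le j).trans
      ((hatMap_ι F g.le ⟨j.1, (show (U : Set P) ⊆ V from f.le) j.2⟩).symm.trans
        ((congrArg (· ≫ hatMap F g.le) (hatMap_ι F f.le j)).symm.trans (Category.assoc _ _ _)))

section Ker
variable {X : Type} [TopologicalSpace X]

/-- The kernel precosheaf `U ↦ Ker (α(U))` of a homomorphism of precosheaves. -/
def kerPC {F G : Precosheaf X} (α : F ⟶ G) : Precosheaf X where
  obj U := AddCommGrpCat.of (AddMonoidHom.ker (α.app U).hom)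
  map {U V} h := AddCommGrpCat.ofHom <|
    AddMonoidHom.codRestrict
      ((F.map h).hom.comp
        (AddMonoidHom.ker (α.app U).hom).subtype) _
      (fun x => by
        have hnat : (α.app V) ((F.map h) x.1) = (G.map h) ((α.app U) x.1) :=
          congrArg (fun (f : F.obj U ⟶ G.obj V) => f x.1) (α.naturality h)
        have hx : (α.app U) x.1 = 0 := x.2
        show (α.app V) ((F.map h) x.1) = 0
        rw [hnat, hx]
        exact map_zero _)
  map_id U := by
    ext x
    exact congrArg (fun (f : F.obj U ⟶ F.obj U) => f x.1) (F.map_id U)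
  map_comp {U V W} f g := by
    ext x
    exact congrArg (fun (fn : F.obj U ⟶ F.obj W) => fn x.1) (F.map_comp f g)

end Ker

/-!
In `X = {a, b, c}` the point `a` lies in every nonempty open set. `F` is the skyscraper cosheaf
`ℤ` at `a`, and `G` is `ℤ` on `U_a = {a}` and `0` elsewhere. `F` is a cosheaf because the members
of a cover that contain `a` span a connected part of the nerve on which `F` is constant; `G` is one
because a cover of `U_a` must contain `U_a`, while over a larger open set the leg at `U_a` factors
through a zero group. The kernel of `α` vanishes exactly on `U_a`, so over the cover
`{a, b}, {a, c}` of `X` its nerve diagram is `ℤ ← 0 → ℤ`, with colimit `ℤ²`, whereas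
`(Ker α)(X) = ℤ`: the two generators are identified in `(Ker α)(X)` but not in the colimit.
-/

section Colimits

variable {J : Type*} [Category J] {C : Type*} [Category C] {D : J ⥤ C}

def isColimitOfSection (t : Cocone D) (j₀ : J) (r : t.pt ⟶ D.obj j₀)
    (hr : r ≫ t.ι.app j₀ = 𝟙 t.pt)
    (h : ∀ (c : Cocone D) (j : J), t.ι.app j ≫ r ≫ c.ι.app j₀ = c.ι.app j) : IsColimit t where
  desc c := r ≫ c.ι.app j₀
  fac := h
  uniq c m hm := by rw [← hm j₀, ← Category.assoc, hr, Category.id_comp]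

def isColimitOfIsZero [HasZeroMorphisms C] (t : Cocone D) (ht : IsZero t.pt)
    (h : ∀ (c : Cocone D) (j : J), c.ι.app j = 0) : IsColimit t where
  desc _ := 0
  fac c j := by rw [comp_zero, h]
  uniq _ _ _ := ht.eq_of_src _ _

lemma ι_apply_eq_of_isColimit {D : J ⥤ AddCommGrpCat.{0}} {t : Cocone D} (ht : IsColimit t)
    (c : Cocone D) {i j : J} {x : D.obj i} {y : D.obj j} (h : t.ι.app i x = t.ι.app j y) :
    c.ι.app i x = c.ι.app j y := by
  rw [← ht.fac c i, ← ht.fac c j, ConcreteCategory.comp_apply, ConcreteCategory.comp_apply, h]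

end Colimits

lemma mem_nerveSet_of_mem {𝒰 : Set (Opens X)} {V : Opens X} (hV : V ∈ 𝒰)
    (hne : (V : Set X).Nonempty) : V ∈ nerveSet 𝒰 :=
  ⟨hne, {V}, by simpa using hV, Finset.singleton_nonempty V, by simp⟩

lemma inf_mem_nerveSet {𝒰 : Set (Opens X)} {V₀ V : Opens X} (h₀ : V₀ ∈ 𝒰)
    (hV : V ∈ nerveSet 𝒰) (hne : ((V₀ ⊓ V : Opens X) : Set X).Nonempty) :
    V₀ ⊓ V ∈ nerveSet 𝒰 := by
  classical
  obtain ⟨-, s, hs, -, rfl⟩ := hV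
  exact ⟨hne, insert V₀ s, by simpa [Set.insert_subset_iff] using ⟨h₀, hs⟩,
    Finset.insert_nonempty _ _, by simp⟩

lemma eq_or_eq_or_eq_inf_of_mem_nerveSet_pair {V₁ V₂ V : Opens X}
    (hV : V ∈ nerveSet {V₁, V₂}) : V = V₁ ∨ V = V₂ ∨ V = V₁ ⊓ V₂ := by
  obtain ⟨-, s, hs, hsne, rfl⟩ := hV
  rw [← Finset.inf'_eq_inf hsne]
  refine Finset.inf'_mem {V | V = V₁ ∨ V = V₂ ∨ V = V₁ ⊓ V₂} ?_ s hsne id fun V hV => ?_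
  · rintro _ (rfl | rfl | rfl) _ (rfl | rfl | rfl) <;> simp [inf_comm]
  · rcases hs hV with rfl | rfl <;> simp

lemma eq_of_le_of_mem_nerveSet_pair {V₁ V₂ V V' : Opens X} (h₁₂ : ¬ V₁ ≤ V₂) (h₂₁ : ¬ V₂ ≤ V₁)
    (hV : V ∈ nerveSet {V₁, V₂}) (hV' : V' ∈ nerveSet {V₁, V₂}) (hle : V ≤ V')
    (hne : V ≠ V₁ ⊓ V₂) : V' = V := by
  rcases eq_or_eq_or_eq_inf_of_mem_nerveSet_pair hV with rfl | rfl | rfl <;>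
    rcases eq_or_eq_or_eq_inf_of_mem_nerveSet_pair hV' with rfl | rfl | rfl <;>
    simp_all

def isColimitCoverCoconeOfMem (F : Precosheaf X) {U : Opens X} {𝒰 : Set (Opens X)}
    (h𝒰 : ∀ V ∈ 𝒰, V ≤ U) (hU : U ∈ 𝒰) (hne : (U : Set X).Nonempty) :
    IsColimit (coverCocone F U 𝒰 h𝒰) :=
  isColimitOfSection _ ⟨U, mem_nerveSet_of_mem hU hne⟩ (𝟙 _)
    ((Category.id_comp _).trans (F.map_id U))
    fun c j => (Category.id_comp (c.ι.app _)).symm ▸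
      c.w (ObjectProperty.homMk (homOfLE (nerve_le h𝒰 j.2)))

lemma mem_minOpen_self (x : X) : x ∈ minOpen x :=
  Set.mem_sInter.2 fun _ h => h.2

lemma Uo_le_iff [AlexandrovDiscrete X] {x : X} {U : Opens X} : Uo x ≤ U ↔ x ∈ U :=
  ⟨fun h => h (mem_minOpen_self x), minOpen_le⟩

lemma Uo_le_of_isGenericPoint [AlexandrovDiscrete X] {p : X} (hp : IsGenericPoint p Set.univ)
    {U : Opens X} (hU : (U : Set X).Nonempty) : Uo p ≤ U :=
  Uo_le_iff.2 ((hp.mem_open_set_iff U.isOpen).2 (by simpa using hU))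

instance Topology.IsUpperSet.t0Space {α : Type*} [PartialOrder α] [TopologicalSpace α]
    [Topology.IsUpperSet α] : T0Space α :=
  (t0Space_iff_inseparable α).2 fun _ _ h =>
    le_antisymm (specializes_iff_le.1 h.specializes') (specializes_iff_le.1 h.specializes)

lemma Topology.IsUpperSet.isGenericPoint_top {α : Type*} [Preorder α] [OrderTop α]
    [TopologicalSpace α] [Topology.IsUpperSet α] : IsGenericPoint (⊤ : α) Set.univ := by
  simp [IsGenericPoint]

/-- `ℤ` if `q` holds and `0` otherwise. Taking both values inside `ℤ` lets every structure map
below be a restriction of the identity or zero. -/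
def subgroupIf (q : Prop) : AddSubgroup ℤ where
  carrier := {n | q ∨ n = 0}
  zero_mem' := Or.inr rfl
  add_mem' := by rintro m n (h | rfl) (h' | rfl) <;> simp_all
  neg_mem' := by rintro n (h | rfl) <;> simp_all

lemma subgroupIf_mono {q r : Prop} (h : q → r) : subgroupIf q ≤ subgroupIf r :=
  fun _ hn => hn.imp_left h

lemma coe_subgroupIf_eq_zero {q : Prop} (hq : ¬ q) (n : subgroupIf q) : (n : ℤ) = 0 :=
  n.2.resolve_left hq

lemma isZero_subgroupIf {q : Prop} (hq : ¬ q) :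
    IsZero (AddCommGrpCat.of (subgroupIf q)) :=
  @AddCommGrpCat.isZero_of_subsingleton _ ⟨fun m n =>
    Subtype.ext ((coe_subgroupIf_eq_zero hq m).trans (coe_subgroupIf_eq_zero hq n).symm)⟩

def skyscraper (p : X) : Precosheaf X where
  obj U := AddCommGrpCat.of (subgroupIf (p ∈ U))
  map f := AddCommGrpCat.ofHom (AddSubgroup.inclusion (subgroupIf_mono fun h => f.le h))

theorem isCosheaf_skyscraper (p : X) : IsCosheaf (skyscraper p) := by
  intro U 𝒰 h𝒰 hcov
  by_cases hpU : p ∈ U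
  · obtain ⟨V₀, hV₀, hpV₀⟩ := Opens.mem_sSup.1 (hcov hpU)
    have hj₀ : V₀ ∈ nerveSet 𝒰 := mem_nerveSet_of_mem hV₀ ⟨p, hpV₀⟩
    refine ⟨isColimitOfSection _ ⟨V₀, hj₀⟩
      (AddCommGrpCat.ofHom (AddSubgroup.inclusion (subgroupIf_mono fun _ => hpV₀))) rfl ?_⟩
    rintro c ⟨V, hV⟩
    ext n
    by_cases hpV : p ∈ V
    · -- `n` lives on `V₀ ⊓ V`, and both legs agree with the leg there
      let W : ObjectProperty.FullSubcategory (· ∈ nerveSet 𝒰) :=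
        ⟨V₀ ⊓ V, inf_mem_nerveSet hV₀ hV ⟨p, hpV₀, hpV⟩⟩
      let m : (skyscraper p).obj W.1 := ⟨n.1, Or.inl ⟨hpV₀, hpV⟩⟩
      change c.ι.app ⟨V₀, hj₀⟩ ⟨n.1, Or.inl hpV₀⟩ = c.ι.app ⟨V, hV⟩ n
      exact (c.w_apply (ObjectProperty.homMk (homOfLE inf_le_left) : W ⟶ ⟨V₀, hj₀⟩) m).trans
        (c.w_apply (ObjectProperty.homMk (homOfLE inf_le_right) : W ⟶ ⟨V, hV⟩) m).symm
    · obtain rfl : n = 0 := Subtype.ext (coe_subgroupIf_eq_zero hpV n)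
      simp only [map_zero]
  · refine ⟨isColimitOfIsZero _ (isZero_subgroupIf hpU) fun c j => ?_⟩
    exact (isZero_subgroupIf fun hpV => hpU (nerve_le h𝒰 j.2 hpV)).eq_of_src _ _

open Classical in
noncomputable def subgroupIfHom (q r : Prop) : subgroupIf q →+ subgroupIf r :=
  if hr : r then AddSubgroup.inclusion (subgroupIf_mono fun _ => hr) else 0

open Classical in
lemma coe_subgroupIfHom (q r : Prop) (n : subgroupIf q) :
    (subgroupIfHom q r n : ℤ) = if r then (n : ℤ) else 0 := by
  unfold subgroupIfHom
  split_ifs <;> rfl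

noncomputable def concentrated (W : P) : P ⥤ AddCommGrpCat.{0} where
  obj U := AddCommGrpCat.of (subgroupIf (U = W))
  map {U V} _ := AddCommGrpCat.ofHom (subgroupIfHom (U = W) (V = W))
  map_id U := by
    ext n
    refine (coe_subgroupIfHom _ _ n).trans ?_
    split_ifs with hU
    · rfl
    · exact (coe_subgroupIf_eq_zero hU n).symm
  map_comp {U V V'} f g := by
    ext n
    change (subgroupIfHom _ _ n : ℤ) = subgroupIfHom _ (V' = W) (subgroupIfHom _ (V = W) n)
    simp only [coe_subgroupIfHom]
    split_ifs with hV' hV <;> try rfl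
    have hU : U ≠ W := fun hU => hV (le_antisymm (hV' ▸ g.le) (hU ▸ f.le))
    exact coe_subgroupIf_eq_zero hU n

lemma isZero_concentrated_obj {W U : P} (hU : U ≠ W) : IsZero ((concentrated W).obj U) :=
  isZero_subgroupIf hU

theorem isCosheaf_concentrated_Uo [AlexandrovDiscrete X] {p : X}
    (hp : IsGenericPoint p Set.univ) : IsCosheaf (concentrated (Uo p)) := by
  intro U 𝒰 h𝒰 hcov
  by_cases hU : U = Uo p
  · subst hU
    obtain ⟨V₀, hV₀, hpV₀⟩ := Opens.mem_sSup.1 (hcov (mem_minOpen_self p))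
    obtain rfl : V₀ = Uo p := le_antisymm (h𝒰 V₀ hV₀) (Uo_le_iff.2 hpV₀)
    exact ⟨isColimitCoverCoconeOfMem _ h𝒰 hV₀ ⟨p, hpV₀⟩⟩
  · refine ⟨isColimitOfIsZero _ (isZero_concentrated_obj hU) ?_⟩
    rintro c ⟨V, hV⟩
    by_cases hVp : V = Uo p
    · subst hVp
      -- a member of the cover through a point of `U` outside `Uo p` kills the leg at `Uo p`
      obtain ⟨y, hyU, hy⟩ := SetLike.not_le_iff_exists.1
        fun h => hU (le_antisymm h (nerve_le h𝒰 hV))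
      obtain ⟨W, hW, hyW⟩ := Opens.mem_sSup.1 (hcov hyU)
      have hWp : W ≠ Uo p := fun h => hy (h ▸ hyW)
      have hWn : W ∈ nerveSet 𝒰 := mem_nerveSet_of_mem hW ⟨y, hyW⟩
      let f : (⟨Uo p, hV⟩ : ObjectProperty.FullSubcategory (· ∈ nerveSet 𝒰)) ⟶ ⟨W, hWn⟩ :=
        ObjectProperty.homMk (homOfLE (Uo_le_of_isGenericPoint hp ⟨y, hyW⟩))
      rw [← c.w f, (isZero_concentrated_obj hWp).eq_of_tgt
        ((nerveDiagram (concentrated (Uo p)) 𝒰).map f) 0]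
      exact zero_comp
    · exact (isZero_concentrated_obj hVp).eq_of_src _ _

section Kernel

variable [AlexandrovDiscrete X]

noncomputable def skyscraperToConcentrated (p : X) : skyscraper p ⟶ concentrated (Uo p) where
  app U := AddCommGrpCat.ofHom (subgroupIfHom (p ∈ U) (U = Uo p))
  naturality {U V} f := by
    refine AddCommGrpCat.ext fun (n : subgroupIf (p ∈ U)) => Subtype.ext ?_
    change (subgroupIfHom _ (V = Uo p) ⟨n.1, _⟩ : ℤ) =
      subgroupIfHom _ (V = Uo p) (subgroupIfHom _ (U = Uo p) n)
    simp only [coe_subgroupIfHom]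
    split_ifs with hV hU <;> try rfl
    have hpU : p ∉ U := fun hpU => hU (le_antisymm (hV ▸ f.le) (Uo_le_iff.2 hpU))
    exact coe_subgroupIf_eq_zero hpU n

open Classical in
lemma coe_skyscraperToConcentrated_app (p : X) (U : Opens X) (n : (skyscraper p).obj U) :
    ((skyscraperToConcentrated p).app U n).1 = if U = Uo p then n.1 else 0 :=
  coe_subgroupIfHom _ _ n

lemma surjective_skyscraperToConcentrated_app (p : X) (U : Opens X) :
    Function.Surjective ((skyscraperToConcentrated p).app U) := by
  intro n
  by_cases hU : U = Uo p
  · refine ⟨⟨n.1, Or.inl (hU ▸ mem_minOpen_self p)⟩, Subtype.ext ?_⟩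
    exact (coe_skyscraperToConcentrated_app p U _).trans (if_pos hU)
  · refine ⟨0, Subtype.ext ?_⟩
    exact (congrArg Subtype.val (map_zero _)).trans (coe_subgroupIf_eq_zero hU n).symm

lemma coe_eq_zero_of_mem_kerPC_Uo (p : X) (k : (kerPC (skyscraperToConcentrated p)).obj (Uo p)) :
    k.1.1 = 0 := by
  have h := congrArg Subtype.val k.2
  rw [coe_skyscraperToConcentrated_app, if_pos rfl] at h
  exact h

lemma mem_ker_skyscraperToConcentrated_app (p : X) {U : Opens X} (hU : U ≠ Uo p)
    (n : (skyscraper p).obj U) : n ∈ ((skyscraperToConcentrated p).app U).hom.ker :=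
  Subtype.ext ((coe_skyscraperToConcentrated_app p U n).trans (if_neg hU))

open Classical in
noncomputable def kerPairLeg (p : X) (V₁ V : Opens X) :
    (kerPC (skyscraperToConcentrated p)).obj V ⟶ AddCommGrpCat.of ℤ :=
  AddCommGrpCat.ofHom <|
    if V = V₁ then (AddSubgroup.subtype _).comp (AddSubgroup.subtype _) else 0

open Classical in
lemma kerPairLeg_apply (p : X) (V₁ V : Opens X) (k : (kerPC (skyscraperToConcentrated p)).obj V) :
    kerPairLeg p V₁ V k = if V = V₁ then k.1.1 else 0 := by
  unfold kerPairLeg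
  split_ifs <;> rfl

open Classical in
/-- The projection of the colimit `ℤ²` onto the summand of `V₁`. -/
noncomputable def kerPairCocone (p : X) {V₁ V₂ : Opens X} (h₁₂ : ¬ V₁ ≤ V₂) (h₂₁ : ¬ V₂ ≤ V₁)
    (hinf : V₁ ⊓ V₂ = Uo p) :
    Cocone (nerveDiagram (kerPC (skyscraperToConcentrated p)) {V₁, V₂}) where
  pt := AddCommGrpCat.of ℤ
  ι.app V := kerPairLeg p V₁ V.1
  ι.naturality := by
    rintro ⟨V, hV⟩ ⟨V', hV'⟩ f
    refine AddCommGrpCat.ext fun (k : (kerPC (skyscraperToConcentrated p)).obj V) => ?_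
    change kerPairLeg p V₁ V' ((kerPC _).map f.hom k) = kerPairLeg p V₁ V k
    rw [kerPairLeg_apply, kerPairLeg_apply]
    by_cases hVinf : V = V₁ ⊓ V₂
    · rw [hinf] at hVinf
      subst hVinf
      change (if V' = V₁ then k.1.1 else 0) = if Uo p = V₁ then k.1.1 else 0
      simp only [coe_eq_zero_of_mem_kerPC_Uo, ite_self]
    · obtain rfl := eq_of_le_of_mem_nerveSet_pair h₁₂ h₂₁ hV hV' f.hom.le hVinf
      rfl

theorem not_isCosheaf_kerPC_skyscraperToConcentrated (p : X) {V₁ V₂ : Opens X}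
    (h₁₂ : ¬ V₁ ≤ V₂) (h₂₁ : ¬ V₂ ≤ V₁) (hinf : V₁ ⊓ V₂ = Uo p) :
    ¬ IsCosheaf (kerPC (skyscraperToConcentrated p)) := by
  intro hK
  have h𝒰 : ∀ V ∈ ({V₁, V₂} : Set (Opens X)), V ≤ V₁ ⊔ V₂ := by
    rintro _ (rfl | rfl)
    exacts [le_sup_left, le_sup_right]
  obtain ⟨ht⟩ := hK (V₁ ⊔ V₂) {V₁, V₂} h𝒰 sSup_pair.ge
  have hp₁ : p ∈ V₁ := Uo_le_iff.1 (hinf ▸ inf_le_left)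
  have hp₂ : p ∈ V₂ := Uo_le_iff.1 (hinf ▸ inf_le_right)
  have hV₁ : V₁ ≠ Uo p := fun h => h₁₂ (h ▸ hinf ▸ inf_le_right)
  have hV₂ : V₂ ≠ Uo p := fun h => h₂₁ (h ▸ hinf ▸ inf_le_left)
  -- both generators map to `1 ∈ (Ker α)(V₁ ⊔ V₂)`
  have := ι_apply_eq_of_isColimit ht (kerPairCocone p h₁₂ h₂₁ hinf)
    (i := ⟨V₁, mem_nerveSet_of_mem (Or.inl rfl) ⟨p, hp₁⟩⟩)
    (j := ⟨V₂, mem_nerveSet_of_mem (Or.inr rfl) ⟨p, hp₂⟩⟩)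
    (x := ⟨⟨1, Or.inl hp₁⟩, mem_ker_skyscraperToConcentrated_app p hV₁ _⟩)
    (y := ⟨⟨1, Or.inl hp₂⟩, mem_ker_skyscraperToConcentrated_app p hV₂ _⟩) rfl
  have hV₂₁ : V₂ ≠ V₁ := fun h => h₂₁ h.le
  have h := (kerPairLeg_apply p V₁ V₁ _).symm.trans (this.trans (kerPairLeg_apply p V₁ V₂ _))
  rw [if_pos rfl, if_neg hV₂₁] at h
  exact one_ne_zero (α := ℤ) h

end Kernel

inductive Xc : Type
  | a | b | c

namespace Xc

instance : PartialOrder Xc where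
  le x y := x = y ∨ y = a
  le_refl _ := Or.inl rfl
  le_trans _ _ _ := by rintro (rfl | rfl) (rfl | rfl) <;> simp
  le_antisymm _ _ := by rintro (rfl | rfl) (h | h) <;> simp_all

instance : OrderTop Xc where
  top := a
  le_top _ := Or.inr rfl

instance : TopologicalSpace Xc := upTop Xc

instance : Topology.IsUpperSet Xc := ⟨rfl⟩

lemma isOpen_of_a_mem {s : Set Xc} (h : a ∈ s) : IsOpen s :=
  Topology.IsUpperSet.isOpen_iff_isUpperSet.2 fun _ _ hxy hx => by
    rcases hxy with rfl | rfl
    exacts [hx, h]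

def Uab : Opens Xc := ⟨{a, b}, isOpen_of_a_mem (Or.inl rfl)⟩

def Uac : Opens Xc := ⟨{a, c}, isOpen_of_a_mem (Or.inl rfl)⟩

@[simp]
lemma mem_Uab {x : Xc} : x ∈ Uab ↔ x = a ∨ x = b := Iff.rfl

@[simp]
lemma mem_Uac {x : Xc} : x ∈ Uac ↔ x = a ∨ x = c := Iff.rfl

lemma not_Uab_le_Uac : ¬ Uab ≤ Uac :=
  fun h => by simpa using h (mem_Uab.2 (Or.inr rfl))

lemma not_Uac_le_Uab : ¬ Uac ≤ Uab :=
  fun h => by simpa using h (mem_Uac.2 (Or.inr rfl))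

lemma Uab_inf_Uac : Uab ⊓ Uac = Uo a := by
  refine le_antisymm (fun x ⟨hab, hac⟩ => ?_) (Uo_le_iff.2 ⟨Or.inl rfl, Or.inl rfl⟩)
  obtain rfl : x = a := by cases x <;> simp_all
  exact mem_minOpen_self a

end Xc

/-- There is a `T0` Alexandroff space `X`, cosheaves `F, G` on `X` and a surjective
homomorphism `α : F → G` whose kernel precosheaf is not a cosheaf. -/
theorem stmt_14 :
    ∃ (X : Type) (_ : TopologicalSpace X) (_ : AlexandrovDiscrete X) (_ : T0Space X)
      (F G : Precosheaf X) (α : F ⟶ G),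
      IsCosheaf F ∧ IsCosheaf G ∧ (∀ U : Opens X, Function.Surjective (α.app U)) ∧
        ¬ IsCosheaf (kerPC α) :=
  ⟨Xc, inferInstance, inferInstance, inferInstance, skyscraper Xc.a, concentrated (Uo Xc.a),
    skyscraperToConcentrated Xc.a, isCosheaf_skyscraper Xc.a,
    isCosheaf_concentrated_Uo Topology.IsUpperSet.isGenericPoint_top,
    surjective_skyscraperToConcentrated_app Xc.a,
    not_isCosheaf_kerPC_skyscraperToConcentrated Xc.a Xc.not_Uab_le_Uac Xc.not_Uac_le_Uab
      Xc.Uab_inf_Uac⟩
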